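/- arXiv:1111.3405 — 2 statements merged into one kernel-verified Lean document; each statement's English description precedes it below -/
import Mathlib

section
/- Let 0 = r_0 < r_1 < ... < r_n with r_1 = 1. Then the derivative of the Gelfond-Bernstein basis satisfies H'_{k,\Lambda}(t) = (\prod_{j=k+1}^n r_j / \prod_{j=k+1}^n (r_j - 1)) ( r_k H^{n-1}_{k-1,\Lambda_1}(t) - (r_{k+1}-1) H^{n-1}_{k,\Lambda_1}(t) ), where \Lambda_1 = (0, r_2 - 1, ..., r_n - 1), with the conventions H'_{0,\Lambda}(t) = -(\prod_{j=2}^n r_j/\prod_{j=2}^n (r_j-1)) H^{n-1}_{0,\Lambda_1}(t) and H'_{n,\Lambda}(t) = r_n t^{r_n - 1}. -/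
/-!
Differentiating under the divided difference gives `d/dt [x₀,…,x_m] t^x = [x₀,…,x_m] x t^(x-1)`.
The Leibniz rule `[x₀,…,x_m] (x g) = x₀ [x₀,…,x_m] g + [x₁,…,x_m] g` splits this into two divided
differences of `t^(x-1)`, and `t^(x-1)` at the nodes `r_j` is `t^x` at the nodes `r_j - 1` of `Λ₁`.
Up to the normalising products `∏ (r_j - 1)`, which are nonzero because `r` increases from
`r₁ = 1`, these are `H^{n-1}_{k-1,Λ₁}` and `H^{n-1}_{k,Λ₁}`; for `k = 0` the first one carries the
factor `r₀ = 0`.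
-/

/-- The divided difference `[x 0, ..., x n] f` at pairwise distinct points,
given by the explicit formula `∑ i, f (x i) / ∏_{j ≠ i} (x i - x j)`. -/
noncomputable def divSum (n : ℕ) (x : Fin (n+1) → ℝ) (f : ℝ → ℝ) : ℝ :=
  ∑ i : Fin (n+1), f (x i) / ∏ j ∈ Finset.univ.erase i, (x i - x j)


/-- The Gelfond-Bernstein basis function `H^n_{k,Λ}` associated with the sequence
`Λ = (r 0, ..., r n)`: `H^n_k (t) = (-1)^(n-k) r_{k+1} ⋯ r_n [r_k, ..., r_n] f_t`
for `k ≤ n-1` and `H^n_n (t) = t ^ (r n)`, where `f_t x = t ^ x` (real power). -/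
noncomputable def GB (n : ℕ) (r : Fin (n+1) → ℝ) (k : Fin (n+1)) (t : ℝ) : ℝ :=
  if k.val = n then t ^ (r k)
  else (-1 : ℝ) ^ (n - k.val) * (∏ j ∈ Finset.Ioi k, r j) *
    divSum (n - k.val)
      (fun i => r ⟨k.val + i.val, by have h1 := i.isLt; have h2 := k.isLt; omega⟩)
      (fun x => t ^ x)

open Finset

theorem Fin.prod_univ_erase_succ {M : Type*} [CommMonoid M] {m : ℕ} (g : Fin (m + 2) → M)
    (i : Fin (m + 1)) :
    ∏ j ∈ univ.erase i.succ, g j = g 0 * ∏ j ∈ univ.erase i, g j.succ := by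
  have erase_eq : ∀ {n} (f : Fin n → M) (a),
      ∏ j ∈ univ.erase a, f j = ∏ j, Function.update f a 1 j := fun f a => by
    rw [prod_update_of_mem (mem_univ a), one_mul, sdiff_singleton_eq_erase]
  rw [erase_eq, erase_eq, Fin.prod_univ_succ, Function.update_of_ne (Fin.succ_ne_zero i).symm]
  simp only [Function.update_apply, Fin.succ_inj]

theorem Fin.prod_Ioi_mk_eq_mul {M : Type*} [CommMonoid M] {N k : ℕ} (hk : k + 1 < N)
    (g : Fin N → M) :
    ∏ j ∈ Ioi (⟨k, by omega⟩ : Fin N), g j = g ⟨k + 1, hk⟩ * ∏ j ∈ Ioi ⟨k + 1, hk⟩, g j := by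
  rw [mul_prod_Ioi_eq_prod_Ici]
  congr 1
  ext j
  simp [Fin.lt_def, Fin.le_def]

theorem divSum_congr_val {m m' : ℕ} (h : m = m') {x : Fin (m + 1) → ℝ} {y : Fin (m' + 1) → ℝ}
    (hxy : ∀ i (hi : i < m + 1) (hi' : i < m' + 1), x ⟨i, hi⟩ = y ⟨i, hi'⟩) (f : ℝ → ℝ) :
    divSum m x f = divSum m' y f := by
  subst h
  congr
  funext i
  exact hxy i i.2 i.2

theorem divSum_sub_const (m : ℕ) (x : Fin (m + 1) → ℝ) (c : ℝ) (f : ℝ → ℝ) :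
    divSum m (fun i => x i - c) f = divSum m x (fun a => f (a - c)) := by
  simp only [divSum, sub_sub_sub_cancel_right]

theorem divSum_id_mul (m : ℕ) {x : Fin (m + 2) → ℝ} (hx : Function.Injective x) (f : ℝ → ℝ) :
    divSum (m + 1) x (fun a => a * f a)
      = x 0 * divSum (m + 1) x f + divSum m (fun i => x i.succ) f := by
  rw [← sub_eq_iff_eq_add']
  calc divSum (m + 1) x (fun a => a * f a) - x 0 * divSum (m + 1) x f
      = ∑ i, (x i - x 0) * (f (x i) / ∏ j ∈ univ.erase i, (x i - x j)) := by
        rw [divSum, divSum, mul_sum, ← sum_sub_distrib]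
        congr with i
        ring
    _ = divSum m (fun i => x i.succ) f := by
        rw [Fin.sum_univ_succ, sub_self, zero_mul, zero_add]
        refine sum_congr rfl fun i _ => ?_
        have hi : x i.succ - x 0 ≠ 0 := sub_ne_zero.2 (hx.ne (Fin.succ_ne_zero i))
        rw [Fin.prod_univ_erase_succ, ← mul_div_assoc, mul_div_mul_left _ _ hi]

theorem hasDerivAt_divSum_rpow (m : ℕ) {x : Fin (m + 2) → ℝ} (hx : Function.Injective x)
    {t : ℝ} (ht : t ≠ 0) :
    HasDerivAt (fun u => divSum (m + 1) x (u ^ ·))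
      (x 0 * divSum (m + 1) (fun i => x i - 1) (t ^ ·)
        + divSum m (fun i => x i.succ - 1) (t ^ ·)) t := by
  have hderiv : HasDerivAt (fun u => divSum (m + 1) x (u ^ ·))
      (divSum (m + 1) x (fun a => a * t ^ (a - 1))) t :=
    HasDerivAt.fun_sum fun i _ => (Real.hasDerivAt_rpow_const (Or.inl ht)).div_const _
  rwa [divSum_sub_const, divSum_sub_const, ← divSum_id_mul m hx]

theorem GB_eq_divSum {N k m : ℕ} (h : N = k + m) (r : Fin (N + 1) → ℝ) (t : ℝ) :
    GB N r ⟨k, by omega⟩ t = (-1) ^ m * (∏ j ∈ Ioi ⟨k, by omega⟩, r j) *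
      divSum m (fun i => r ⟨k + i, by omega⟩) (t ^ ·) := by
  subst h
  by_cases hm : m = 0
  · -- the top branch `t ^ r N` of `GB` is the general formula with an empty product
    subst hm
    have hempty : Ioi (⟨k, by omega⟩ : Fin (k + 0 + 1)) = ∅ := by
      ext j
      simp [Fin.lt_def]
      omega
    simp [GB, divSum, hempty]
  · rw [GB, if_neg (by simpa using hm)]
    congr 1
    · rw [Nat.add_sub_cancel_left]
    · exact divSum_congr_val (Nat.add_sub_cancel_left ..) (fun _ _ _ => rfl) _

theorem GB_sub_one_eq_divSum {n j m : ℕ} (h : n = j + m) (r : Fin (n + 2) → ℝ) (t : ℝ) :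
    GB n (fun i => r i.succ - 1) ⟨j, by omega⟩ t = (-1) ^ m *
      (∏ i ∈ Ioi ⟨j + 1, by omega⟩, (r i - 1)) *
        divSum m (fun i => r ⟨j + 1 + i, by omega⟩ - 1) (t ^ ·) := by
  rw [GB_eq_divSum h, ← Fin.succ_mk _ _ (by omega), Fin.prod_Ioi_succ]
  congr with i
  simp only [Fin.succ_mk]
  congr 1
  exact congrArg r (Fin.ext (by simp only; omega))

theorem hasDerivAt_GB {N k m : ℕ} (h : N = k + (m + 1)) {r : Fin (N + 1) → ℝ}
    (hr : Function.Injective r) {t : ℝ} (ht : t ≠ 0) :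
    HasDerivAt (GB N r ⟨k, by omega⟩)
      ((-1) ^ (m + 1) * (∏ j ∈ Ioi ⟨k, by omega⟩, r j) *
        (r ⟨k, by omega⟩ * divSum (m + 1) (fun i => r ⟨k + i, by omega⟩ - 1) (t ^ ·)
          + divSum m (fun i => r ⟨k + 1 + i, by omega⟩ - 1) (t ^ ·))) t := by
  have hnodes : Function.Injective fun i : Fin (m + 2) => r ⟨k + i, by omega⟩ :=
    fun i i' hii' => Fin.ext (by simpa using hr hii')
  have hD := (hasDerivAt_divSum_rpow m hnodes ht).const_mul
    ((-1) ^ (m + 1) * ∏ j ∈ Ioi ⟨k, by omega⟩, r j)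
  rw [funext (GB_eq_divSum h r)]
  refine hD.congr_deriv ?_
  congr with i
  simp only [Fin.val_succ]
  congr 1
  exact congrArg r (Fin.ext (by simp only; omega))

/-- Here `Λ = (r 0, …, r (n + 1))` has order `n + 1`, and `Λ₁` is `fun i => r i.succ - 1`. -/
theorem stmt8 (n : ℕ) (r : Fin (n+2) → ℝ) (hr : StrictMono r) (h0 : r 0 = 0)
    (h1 : r 1 = 1) (t : ℝ) (ht : 0 < t) :
    (∀ k : ℕ, ∀ _hk1 : 1 ≤ k, ∀ _hk2 : k ≤ n,
      HasDerivAt (GB (n+1) r ⟨k, by omega⟩)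
        (((∏ j ∈ Finset.Ioi (⟨k, by omega⟩ : Fin (n+2)), r j) /
            (∏ j ∈ Finset.Ioi (⟨k, by omega⟩ : Fin (n+2)), (r j - 1))) *
          (r ⟨k, by omega⟩ * GB n (fun i => r i.succ - 1) ⟨k - 1, by omega⟩ t
            - (r ⟨k + 1, by omega⟩ - 1) * GB n (fun i => r i.succ - 1) ⟨k, by omega⟩ t)) t)
    ∧ HasDerivAt (GB (n+1) r 0)
        (-(((∏ j ∈ Finset.Ioi (1 : Fin (n+2)), r j) /
            (∏ j ∈ Finset.Ioi (1 : Fin (n+2)), (r j - 1))) *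
          GB n (fun i => r i.succ - 1) 0 t)) t
    ∧ HasDerivAt (GB (n+1) r (Fin.last (n+1)))
        (r (Fin.last (n+1)) * t ^ (r (Fin.last (n+1)) - 1)) t := by
  have hr_sub_one : ∀ a : Fin (n + 2), 1 < a → r a - 1 ≠ 0 := fun a ha =>
    sub_ne_zero.2 (h1 ▸ hr ha).ne'
  have hprod : ∀ a : Fin (n + 2), 1 ≤ a → ∏ j ∈ Ioi a, (r j - 1) ≠ 0 := fun a ha =>
    prod_ne_zero_iff.2 fun j hj => hr_sub_one j (ha.trans_lt (mem_Ioi.1 hj))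
  refine ⟨fun k hk1 hk2 => ?_, ?_, ?_⟩
  · obtain ⟨j, rfl⟩ : ∃ j, k = j + 1 := ⟨k - 1, by omega⟩
    obtain ⟨m, hm⟩ := Nat.exists_eq_add_of_le hk2
    have hD := hasDerivAt_GB (show n + 1 = j + 1 + (m + 1) by omega) hr.injective ht.ne'
    have hA := GB_sub_one_eq_divSum (show n = j + (m + 1) by omega) r t
    have hB := GB_sub_one_eq_divSum hm r t
    have hsplit := Fin.prod_Ioi_mk_eq_mul (show j + 1 + 1 < n + 2 by omega) (fun i => r i - 1)
    have hQ₁ := hprod ⟨j + 1 + 1, by omega⟩ (by simp [Fin.le_def])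
    have hc := hr_sub_one ⟨j + 1 + 1, by omega⟩ (by simp [Fin.lt_def])
    simp only [Nat.add_sub_cancel]
    refine hD.congr_deriv ?_
    rw [hA, hB, hsplit]
    field_simp
    ring
  · have hD := hasDerivAt_GB (show n + 1 = 0 + (n + 1) by omega) hr.injective ht.ne'
    have hB := GB_sub_one_eq_divSum (show n = 0 + n by omega) r t
    have hsplit := Fin.prod_Ioi_mk_eq_mul (show 0 + 1 < n + 2 by omega) r
    have hQ₁ := hprod 1 le_rfl
    simp only [zero_add, Fin.mk_zero, Fin.mk_one, h0, h1] at hD hB hsplit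
    refine hD.congr_deriv ?_
    rw [hB, hsplit]
    field_simp
    ring
  · have hlast : GB (n + 1) r (Fin.last (n + 1)) = fun u => u ^ r (Fin.last (n + 1)) := by
      funext u
      simp [GB]
    rw [hlast]
    exact Real.hasDerivAt_rpow_const (Or.inl ht.ne')
end

section
/- Let 0 = r_0 < r_1 < ... < r_n be real numbers with r_1 = 1, and let P(t) = \sum_{k=0}^n H^n_{k,\Lambda}(t) P_k be a Gelfond-B\'ezier curve with control points P_k in \mathbb{R}^s. Then P'(0) = (\prod_{j=2}^n r_j / \prod_{j=2}^n (r_j - 1)) (P_1 - P_0) and P'(1) = r_n (P_n - P_{n-1}). -/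
/-!
Expanding the divided difference, `H^n_k(t) = ∑_{j ≥ k} c_{kj} t^{r_j}`, so the derivative of
`H^n_k` at an endpoint is the same divided difference `[r_k, ..., r_n]`, applied to the values
`d/dt t^{r_j}` there instead of `t^{r_j}`.

At `t = 1` these values are the nodes `r_j` themselves. The divided difference of the identity on
`m + 1 ≥ 2` nodes is the coefficient of `X^m` in the interpolant of `X`, that is `1` for `m = 1` and
`0` otherwise, so only `H_{n-1}` and `H_n` have nonzero derivative, `∓ r_n`.

At `t = 0` the exponents are `r_0 = 0` and `r_j ≥ r_1 = 1`, so the values are the indicator of the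
node `r_1`: only `H_0` and `H_1` have nonzero derivative, and these two are opposite.
-/

open Finset

section DivDiff

variable {ι K : Type*} [DecidableEq ι] [Field K]

noncomputable def divDiff (I : Finset ι) (x y : ι → K) : K :=
  ∑ i ∈ I, y i / ∏ j ∈ I.erase i, (x i - x j)

theorem divDiff_singleton (x y : ι → K) (i : ι) : divDiff {i} x y = y i := by
  simp [divDiff]

theorem divDiff_map {κ : Type*} [DecidableEq κ] (I : Finset κ) (e : κ ↪ ι) (x y : ι → K) :
    divDiff (I.map e) x y = divDiff I (x ∘ e) (y ∘ e) := by
  simp [divDiff, ← map_erase]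

theorem divDiff_self {I : Finset ι} {x : ι → K} (hx : Set.InjOn x I) (hI : 2 ≤ #I) :
    divDiff I x x = if #I = 2 then 1 else 0 := by
  have h := Lagrange.coeff_eq_sum hx (P := Polynomial.X)
    (by rw [Polynomial.degree_X]; exact_mod_cast hI)
  simp only [Polynomial.eval_X, Polynomial.coeff_X] at h
  rw [divDiff, ← h]
  grind

theorem divDiff_ite_eq (I : Finset ι) (x : ι → K) (c : ι) :
    divDiff I x (fun i => if i = c then 1 else 0) =
      if c ∈ I then (∏ j ∈ I.erase c, (x c - x j))⁻¹ else 0 := by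
  simp [divDiff, ite_div]

theorem HasDerivAt.divDiff {𝕜 : Type*} [NontriviallyNormedField 𝕜] {I : Finset ι}
    {x : ι → 𝕜} {y : 𝕜 → ι → 𝕜} {y' : ι → 𝕜} {t : 𝕜}
    (h : ∀ i ∈ I, HasDerivAt (fun s => y s i) (y' i) t) :
    HasDerivAt (fun s => divDiff I x (y s)) (divDiff I x y') t :=
  HasDerivAt.fun_sum fun i hi => (h i hi).div_const _

end DivDiff

theorem hasDerivAt_rpow_const_one (p : ℝ) : HasDerivAt (fun t : ℝ => t ^ p) p 1 := by
  simpa using Real.hasDerivAt_rpow_const (x := 1) (p := p) (Or.inl one_ne_zero)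

theorem hasDerivAt_rpow_const_zero {p : ℝ} (hp : p = 0 ∨ 1 ≤ p) :
    HasDerivAt (fun t : ℝ => t ^ p) (if p = 1 then 1 else 0) 0 := by
  rcases hp with rfl | hp
  · simpa using hasDerivAt_const (0 : ℝ) (1 : ℝ)
  · convert Real.hasDerivAt_rpow_const (x := 0) (Or.inr hp) using 1
    split_ifs with hp1
    · simp [hp1]
    · rw [Real.zero_rpow (sub_ne_zero.mpr hp1), mul_zero]

theorem Fintype.sum_smul_eq_smul_sub {ι R M : Type*} [Fintype ι] [Ring R] [AddCommGroup M]
    [Module R M] {d : ι → R} {a b : ι} (hab : a ≠ b) (hb : d b = -d a)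
    (h : ∀ k, k ≠ a ∧ k ≠ b → d k = 0) (Q : ι → M) :
    ∑ k, d k • Q k = d a • (Q a - Q b) := by
  rw [Fintype.sum_eq_add a b hab (fun k hk => by simp [h k hk]), hb, smul_sub, neg_smul,
    sub_eq_add_neg]

section GelfondBernstein

variable {n : ℕ}

def Fin.shiftEmb (k : Fin (n + 1)) : Fin (n - k + 1) ↪ Fin (n + 1) where
  toFun i := ⟨k + i, by omega⟩
  inj' i j h := Fin.ext (by simpa using congrArg Fin.val h)

@[simp]
theorem Fin.val_shiftEmb (k : Fin (n + 1)) (i : Fin (n - k + 1)) :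
    (Fin.shiftEmb k i : ℕ) = k + i :=
  rfl

theorem Fin.map_shiftEmb_univ (k : Fin (n + 1)) : univ.map (Fin.shiftEmb k) = Ici k := by
  ext j
  simp only [mem_map, mem_univ, true_and, mem_Ici, Fin.le_def, Fin.ext_iff, Fin.val_shiftEmb]
  constructor
  · rintro ⟨i, hi⟩
    omega
  · intro hkj
    exact ⟨⟨j - k, by omega⟩, by simp only; omega⟩

theorem Fin.Ioi_zero_eq_insert_Ioi {i₁ : Fin (n + 1)} (hi₁ : (i₁ : ℕ) = 1) :
    Ioi 0 = insert i₁ (Ioi i₁) := by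
  ext j
  simp only [mem_Ioi, mem_insert, Fin.lt_def, Fin.ext_iff, hi₁, Fin.val_zero]
  omega

theorem Fin.erase_Ici_zero_eq_insert_Ioi {i₁ : Fin (n + 1)} (hi₁ : (i₁ : ℕ) = 1) :
    (Ici 0).erase i₁ = insert 0 (Ioi i₁) := by
  ext j
  simp only [mem_erase, mem_Ici, mem_insert, mem_Ioi, Fin.le_def, Fin.lt_def, ne_eq,
    Fin.ext_iff, hi₁, Fin.val_zero]
  omega

theorem GB_eq_divDiff (r : Fin (n + 1) → ℝ) (k : Fin (n + 1)) (t : ℝ) :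
    GB n r k t =
      (-1) ^ (n - k) * (∏ j ∈ Ioi k, r j) * divDiff (Ici k) r (fun j => t ^ r j) := by
  rw [GB]
  split_ifs with hk
  · obtain rfl : k = Fin.last n := Fin.ext hk
    rw [show Ici (Fin.last n) = {Fin.last n} from Ici_top, show Ioi (Fin.last n) = ∅ from Ioi_top]
    simp [divDiff_singleton]
  · rw [← Fin.map_shiftEmb_univ, divDiff_map]
    rfl

theorem hasDerivAt_GB_s9 (r : Fin (n + 1) → ℝ) (k : Fin (n + 1)) {t : ℝ}
    {y' : Fin (n + 1) → ℝ} (h : ∀ j, HasDerivAt (fun s => s ^ r j) (y' j) t) :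
    HasDerivAt (GB n r k) ((-1) ^ (n - k) * (∏ j ∈ Ioi k, r j) * divDiff (Ici k) r y') t := by
  rw [funext (GB_eq_divDiff r k)]
  exact (HasDerivAt.divDiff fun j _ => h j).const_mul _

variable {r : Fin (n + 1) → ℝ}

theorem hasDerivAt_GB_one (hr : Function.Injective r) (k : Fin (n + 1)) :
    HasDerivAt (GB n r k)
      (if k = Fin.last n then r (Fin.last n) else if (k : ℕ) + 1 = n then -r (Fin.last n) else 0)
      1 := by
  convert hasDerivAt_GB_s9 r k (fun j => hasDerivAt_rpow_const_one (r j)) using 1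
  have hcard : #(Ici k) = n + 1 - k := by simp
  split_ifs with hlast hpen
  · subst hlast
    rw [show Ici (Fin.last n) = {Fin.last n} from Ici_top, show Ioi (Fin.last n) = ∅ from Ioi_top]
    simp [divDiff_singleton]
  · have hIoi : Ioi k = {Fin.last n} := by
      ext j
      simp only [mem_Ioi, mem_singleton, Fin.lt_def, Fin.ext_iff, Fin.val_last]
      omega
    rw [divDiff_self hr.injOn (by omega), if_pos (by omega), hIoi, prod_singleton,
      show n - k = 1 by omega]
    ring
  · have hk : (k : ℕ) < n := Fin.val_lt_last hlast
    rw [divDiff_self hr.injOn (by omega), if_neg (by omega), mul_zero]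

theorem hasDerivAt_rpow_node_zero {i₁ : Fin (n + 1)} (hi₁ : (i₁ : ℕ) = 1)
    (hr : StrictMono r) (h0 : r 0 = 0) (h1 : r i₁ = 1) (j : Fin (n + 1)) :
    HasDerivAt (fun t : ℝ => t ^ r j) (if j = i₁ then 1 else 0) 0 := by
  have hrj : r j = 0 ∨ 1 ≤ r j := by
    rcases Nat.eq_zero_or_pos j with hj | hj
    · exact Or.inl (by rw [← h0]; congr; exact Fin.ext hj)
    · exact Or.inr (h1 ▸ hr.monotone (Fin.le_def.2 (by omega)))
  simpa only [hr.injective.eq_iff' h1] using hasDerivAt_rpow_const_zero hrj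

theorem hasDerivAt_GB_zero {i₁ : Fin (n + 1)} (hi₁ : (i₁ : ℕ) = 1) (hr : StrictMono r)
    (h0 : r 0 = 0) (h1 : r i₁ = 1) (k : Fin (n + 1)) :
    HasDerivAt (GB n r k)
      (if k = i₁ then (∏ j ∈ Ioi i₁, r j) / ∏ j ∈ Ioi i₁, (r j - 1)
        else if k = 0 then -((∏ j ∈ Ioi i₁, r j) / ∏ j ∈ Ioi i₁, (r j - 1))
        else 0) 0 := by
  convert hasDerivAt_GB_s9 r k (hasDerivAt_rpow_node_zero hi₁ hr h0 h1) using 1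
  rw [divDiff_ite_eq, h1]
  have hn : 1 ≤ n := by have := i₁.isLt; omega
  have hS : ∏ j ∈ Ioi i₁, (1 - r j) = (-1) ^ (n - 1) * ∏ j ∈ Ioi i₁, (r j - 1) := by
    rw [show n - 1 = #(Ioi i₁) by simp [hi₁], ← prod_neg]
    exact prod_congr rfl fun _ _ => (neg_sub _ _).symm
  have hcancel : ∀ a b : ℝ, (-1) ^ (n - 1) * a * ((-1) ^ (n - 1) * b)⁻¹ = a / b := by
    intro a b
    rw [mul_inv, mul_mul_mul_comm, mul_inv_cancel₀ (pow_ne_zero _ (by norm_num)), one_mul,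
      div_eq_mul_inv]
  rcases eq_or_ne k i₁ with rfl | hk1
  · rw [if_pos rfl, if_pos (mem_Ici.2 le_rfl), Ici_erase, hS, hi₁, hcancel]
  rcases eq_or_ne k 0 with rfl | hk0
  · have hpow : (-1 : ℝ) ^ n = -(-1) ^ (n - 1) := by
      obtain ⟨m, rfl⟩ : ∃ m, n = m + 1 := ⟨n - 1, by omega⟩
      simp [pow_succ]
    rw [if_neg hk1, if_pos rfl, if_pos (mem_Ici.2 (Fin.zero_le _)),
      Fin.Ioi_zero_eq_insert_Ioi hi₁, Fin.erase_Ici_zero_eq_insert_Ioi hi₁,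
      prod_insert notMem_Ioi_self, prod_insert (by simp), h0, h1, hS, Fin.val_zero, Nat.sub_zero,
      hpow, sub_zero, one_mul, one_mul, neg_mul, neg_mul, hcancel]
  · have hk : i₁ < k := by
      simp only [ne_eq, Fin.ext_iff, hi₁, Fin.val_zero] at hk1 hk0
      rw [Fin.lt_def, hi₁]
      omega
    rw [if_neg hk1, if_neg hk0, if_neg (by simpa using hk), mul_zero]

end GelfondBernstein

/-- Endpoint derivatives of a Gelfond-Bezier curve when r 1 = 1: the curve is
tangent to the control polygon at both endpoints, with the stated factors. -/
theorem stmt9 (n : ℕ) (hn : 1 ≤ n) (s : ℕ) (r : Fin (n+1) → ℝ) (hr : StrictMono r)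
    (h0 : r 0 = 0) (h1 : r ⟨1, by omega⟩ = 1) (Q : Fin (n+1) → EuclideanSpace ℝ (Fin s)) :
    HasDerivWithinAt (fun t : ℝ => ∑ k : Fin (n+1), GB n r k t • Q k)
      (((∏ j ∈ Finset.Ioi (⟨1, by omega⟩ : Fin (n+1)), r j) /
          (∏ j ∈ Finset.Ioi (⟨1, by omega⟩ : Fin (n+1)), (r j - 1))) •
        (Q ⟨1, by omega⟩ - Q 0))
      (Set.Icc 0 1) 0
    ∧ HasDerivWithinAt (fun t : ℝ => ∑ k : Fin (n+1), GB n r k t • Q k)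
        ((r (Fin.last n)) • (Q (Fin.last n) - Q ⟨n - 1, by omega⟩))
        (Set.Icc 0 1) 1 := by
  constructor
  · have hne : (⟨1, by omega⟩ : Fin (n + 1)) ≠ 0 := by simp [Fin.ext_iff]
    have hcurve := HasDerivAt.fun_sum fun k (_ : k ∈ univ) =>
      (hasDerivAt_GB_zero rfl hr h0 h1 k).smul_const (Q k)
    rw [Fintype.sum_smul_eq_smul_sub hne (by simp [hne.symm]) (fun k hk => by simp [hk.1, hk.2]),
      if_pos rfl] at hcurve
    exact hcurve.hasDerivWithinAt
  · have hne : Fin.last n ≠ ⟨n - 1, by omega⟩ := by simp [Fin.ext_iff]; omega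
    have hcurve := HasDerivAt.fun_sum fun k (_ : k ∈ univ) =>
      (hasDerivAt_GB_one hr.injective k).smul_const (Q k)
    have hpen : ∀ k : Fin (n + 1), k ≠ ⟨n - 1, by omega⟩ → (k : ℕ) + 1 ≠ n :=
      fun k hk h => hk (Fin.ext (by simp only; omega))
    rw [Fintype.sum_smul_eq_smul_sub hne (by simp [hne.symm]; omega)
      (fun k hk => by rw [if_neg hk.1, if_neg (hpen k hk.2)]), if_pos rfl] at hcurve
    exact hcurve.hasDerivWithinAt
end
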